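/- Let m > 1/2 and define H_m(ε) = Var(D(X,ε)) where D(x,t) = (x−t)/(1+(x−t)²) and X has Pearson Type VII density c_m(1+x²)^{−m}. Then H_m(ε) = (2m−1)/(4m(m+1)) + O(ε) as ε → 0⁺. -/

import Mathlib

open MeasureTheory

noncomputable def pearsonC (m : ℝ) : ℝ := (∫ x : ℝ, (1 + x ^ 2) ^ (-m))⁻¹

/-- `H_m(ε) = Var(D(X, ε)) = E[D(X,ε)²] − (E[D(X,ε)])²`. -/
noncomputable def pearsonH (m : ℝ) (ε : ℝ) : ℝ :=
  (∫ x : ℝ, ((x - ε) / (1 + (x - ε) ^ 2)) ^ 2 * (pearsonC m * (1 + x ^ 2) ^ (-m))) -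
    (∫ x : ℝ, (x - ε) / (1 + (x - ε) ^ 2) * (pearsonC m * (1 + x ^ 2) ^ (-m))) ^ 2

section Aux
open Real Filter

lemma pos_base (x : ℝ) : (0:ℝ) < 1 + x ^ 2 := by positivity

lemma integ_rpow {s : ℝ} (hs : 1 / 2 < s) :
    Integrable (fun x : ℝ => (1 + x ^ 2) ^ (-s)) := by
  have h := integrable_rpow_neg_one_add_norm_sq (E := ℝ) (μ := volume)
    (r := 2 * s) (by simpa using by linarith)
  simpa [Real.norm_eq_abs, sq_abs, neg_div, mul_comm, mul_div_assoc] using h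

lemma cont_rpow (s : ℝ) : Continuous (fun x : ℝ => (1 + x ^ 2) ^ (-s)) := by
  apply Continuous.rpow_const (by continuity)
  exact fun x => Or.inl (pos_base x).ne'

lemma I_pos {s : ℝ} (hs : 1 / 2 < s) : 0 < ∫ x : ℝ, (1 + x ^ 2) ^ (-s) := by
  refine (integral_pos_iff_support_of_nonneg (fun x => ?_) (integ_rpow hs)).2 ?_
  · positivity
  · have : Function.support (fun x : ℝ => (1 + x ^ 2) ^ (-s)) = Set.univ := by
      ext x; simp [Function.mem_support]
      positivity
    rw [this]; simp

lemma deriv_v {s : ℝ} (hs : s ≠ 0) (x : ℝ) :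
    HasDerivAt (fun x : ℝ => -(2 * s)⁻¹ * (1 + x ^ 2) ^ (-s))
      (x * (1 + x ^ 2) ^ (-(s + 1))) x := by
  have h1 : HasDerivAt (fun x : ℝ => 1 + x ^ 2) (2 * x) x := by
    simpa using ((hasDerivAt_pow 2 x).const_add 1)
  have h2 := (h1.rpow_const (p := -s) (Or.inl (pos_base x).ne'))
  have h3 := h2.const_mul (-(2 * s)⁻¹)
  refine h3.congr_deriv ?_
  have : -s - 1 = -(s + 1) := by ring
  rw [this]
  field_simp

lemma tendsto_xv {s : ℝ} (hs : 1 / 2 < s) :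
    Tendsto (fun x : ℝ => x * (-(2 * s)⁻¹ * (1 + x ^ 2) ^ (-s))) atTop (nhds 0) ∧
    Tendsto (fun x : ℝ => x * (-(2 * s)⁻¹ * (1 + x ^ 2) ^ (-s))) atBot (nhds 0) := by
  have key : ∀ x : ℝ, 1 ≤ |x| →
      ‖x * (-(2 * s)⁻¹ * (1 + x ^ 2) ^ (-s))‖ ≤ (2 * s)⁻¹ * |x| ^ (1 - 2 * s) := by
    intro x hx
    have hx0 : (0:ℝ) < |x| := lt_of_lt_of_le one_pos hx
    have h1 : (1 + x ^ 2) ^ (-s) ≤ (x ^ 2) ^ (-s) := by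
      have hx2 : (0:ℝ) < x ^ 2 := by nlinarith [sq_abs x]
      apply Real.rpow_le_rpow_of_nonpos hx2 (by linarith) (by linarith)
    have h2 : (x ^ 2 : ℝ) ^ (-s) = |x| ^ (-(2 * s)) := by
      rw [← sq_abs, ← Real.rpow_natCast |x| 2, ← Real.rpow_mul (abs_nonneg x)]
      norm_num
    have h3 : |x| * |x| ^ (-(2 * s)) = |x| ^ (1 - 2 * s) := by
      nth_rewrite 1 [← Real.rpow_one |x|]
      rw [← Real.rpow_add hx0]; ring_nf
    have hv : (0:ℝ) < (1 + x ^ 2) ^ (-s) := by positivity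
    rw [norm_mul, norm_mul, Real.norm_eq_abs, Real.norm_eq_abs, Real.norm_eq_abs,
      abs_of_pos hv, abs_neg, abs_inv, abs_of_pos (by linarith : (0:ℝ) < 2 * s)]
    calc |x| * ((2 * s)⁻¹ * (1 + x ^ 2) ^ (-s))
        ≤ |x| * ((2 * s)⁻¹ * (x ^ 2) ^ (-s)) := by
          apply mul_le_mul_of_nonneg_left _ (abs_nonneg x)
          apply mul_le_mul_of_nonneg_left h1 (by positivity)
      _ = (2 * s)⁻¹ * (|x| * |x| ^ (-(2 * s))) := by rw [h2]; ring
      _ = (2 * s)⁻¹ * |x| ^ (1 - 2 * s) := by rw [h3]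
  have hlim : Tendsto (fun y : ℝ => (2 * s)⁻¹ * y ^ (1 - 2 * s)) atTop (nhds 0) := by
    have h := tendsto_rpow_neg_atTop (by linarith : (0:ℝ) < 2 * s - 1)
    have e : (fun y : ℝ => (2 * s)⁻¹ * y ^ (1 - 2 * s))
        = fun y : ℝ => (2 * s)⁻¹ * y ^ (-(2 * s - 1)) := by
      ext y; rw [show (1 - 2 * s) = -(2 * s - 1) by ring]
    rw [e]
    simpa using h.const_mul (2 * s)⁻¹
  constructor
  · apply squeeze_zero_norm' _ (hlim.comp tendsto_abs_atTop_atTop)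
    filter_upwards [eventually_ge_atTop (1:ℝ)] with x hx
    exact key x (by rw [abs_of_nonneg (by linarith)]; exact hx)
  · apply squeeze_zero_norm' _ (hlim.comp tendsto_abs_atBot_atTop)
    filter_upwards [eventually_le_atBot (-1:ℝ)] with x hx
    exact key x (by rw [abs_of_nonpos (by linarith)]; linarith)

lemma sq_integ {s : ℝ} (hs : 1 / 2 < s) :
    Integrable (fun x : ℝ => x ^ 2 * (1 + x ^ 2) ^ (-(s + 1))) := by
  apply (integ_rpow hs).mono' ((by continuity : Continuous fun x : ℝ => x ^ 2).mul
    (cont_rpow (s+1))).aestronglyMeasurable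
  filter_upwards with x
  simp only [Pi.mul_apply]
  have hb := pos_base x
  have h1 : (1 + x ^ 2) ^ (-(s + 1)) = (1 + x ^ 2) ^ (-s) * (1 + x ^ 2)⁻¹ := by
    rw [show -(s+1) = -s + (-1) by ring, Real.rpow_add hb, Real.rpow_neg_one]
  rw [Real.norm_eq_abs, abs_of_nonneg (by positivity), h1]
  rw [show x ^ 2 * ((1 + x ^ 2) ^ (-s) * (1 + x ^ 2)⁻¹) =
    (x ^ 2 * (1 + x ^ 2)⁻¹) * (1 + x ^ 2) ^ (-s) by ring]
  have : x ^ 2 * (1 + x ^ 2)⁻¹ ≤ 1 := by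
    rw [mul_inv_le_iff₀ hb]; linarith
  nth_rewrite 2 [← one_mul ((1 + x ^ 2) ^ (-s))]
  exact mul_le_mul_of_nonneg_right this (by positivity)

lemma recurrence {s : ℝ} (hs : 1 / 2 < s) :
    ∫ x : ℝ, x ^ 2 * (1 + x ^ 2) ^ (-(s + 1)) = (∫ x : ℝ, (1 + x ^ 2) ^ (-s)) / (2 * s) := by
  have hs0 : s ≠ 0 := by linarith
  have hu : ∀ x : ℝ, HasDerivAt (fun y : ℝ => y) 1 x := fun x => hasDerivAt_id x
  have hT := tendsto_xv hs
  have hiv : Integrable ((fun x : ℝ => x) * fun x => x * (1 + x ^ 2) ^ (-(s + 1))) := by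
    have := sq_integ hs
    apply this.congr
    filter_upwards with x
    simp [Pi.mul_apply]; ring
  have hiv2 : Integrable ((fun _ : ℝ => (1:ℝ)) * fun x => -(2 * s)⁻¹ * (1 + x ^ 2) ^ (-s)) := by
    apply Integrable.congr (((integ_rpow hs).const_mul (-(2 * s)⁻¹)))
    filter_upwards with x
    simp [Pi.mul_apply]
  have := integral_mul_deriv_eq_deriv_mul (fun x _ => hu x) (fun x _ => deriv_v hs0 x) hiv hiv2 hT.2 hT.1
  have e1 : ∫ x : ℝ, x * (x * (1 + x ^ 2) ^ (-(s + 1)))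
      = ∫ x : ℝ, x ^ 2 * (1 + x ^ 2) ^ (-(s + 1)) := by
    congr 1; ext x; ring
  rw [e1] at this
  rw [this]
  rw [integral_congr_ae (g := fun x : ℝ => (-(2 * s)⁻¹) * (1 + x ^ 2) ^ (-s))
    (by filter_upwards with x; ring)]
  rw [integral_const_mul]
  field_simp
  ring

lemma I_succ {m : ℝ} (hm : 1 / 2 < m) :
    ∫ x : ℝ, (1 + x ^ 2) ^ (-(m + 1)) = (2 * m - 1) / (2 * m) * ∫ x : ℝ, (1 + x ^ 2) ^ (-m) := by
  have h1 : ∫ x : ℝ, (1 + x ^ 2) ^ (-m)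
      = (∫ x : ℝ, (1 + x ^ 2) ^ (-(m + 1))) + ∫ x : ℝ, x ^ 2 * (1 + x ^ 2) ^ (-(m + 1)) := by
    rw [← integral_add (integ_rpow (by linarith : (1:ℝ)/2 < m + 1)) (sq_integ hm)]
    apply integral_congr_ae
    filter_upwards with x
    have hb := pos_base x
    rw [show (-m) = -(m + 1) + 1 by ring, Real.rpow_add hb, Real.rpow_one]; ring
  rw [recurrence hm] at h1
  have hm0 : m ≠ 0 := by linarith
  field_simp at h1 ⊢
  linarith

lemma g_bdd (u : ℝ) : |u / (1 + u ^ 2)| ≤ 1 / 2 := by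
  rw [abs_div, abs_of_pos (pos_base u), div_le_iff₀ (pos_base u)]
  nlinarith [sq_abs u, sq_nonneg (|u| - 1)]

lemma g_lip (a b : ℝ) : |a / (1 + a ^ 2) - b / (1 + b ^ 2)| ≤ |a - b| := by
  have ha := pos_base a
  have hb := pos_base b
  have eq : a / (1 + a ^ 2) - b / (1 + b ^ 2)
      = (a - b) * (1 - a * b) / ((1 + a ^ 2) * (1 + b ^ 2)) := by
    field_simp; ring
  rw [eq, abs_div, abs_mul,
    abs_of_pos (show (0:ℝ) < (1 + a ^ 2) * (1 + b ^ 2) by positivity),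
    div_le_iff₀ (show (0:ℝ) < (1 + a ^ 2) * (1 + b ^ 2) by positivity)]
  have h : |1 - a * b| ≤ (1 + a ^ 2) * (1 + b ^ 2) := by
    rw [abs_le]; constructor <;> nlinarith [sq_nonneg (a + b), sq_nonneg (a - b), sq_nonneg (a * b)]
  calc |a - b| * |1 - a * b| ≤ |a - b| * ((1 + a ^ 2) * (1 + b ^ 2)) :=
        mul_le_mul_of_nonneg_left h (abs_nonneg _)
    _ = |a - b| * ((1 + a ^ 2) * (1 + b ^ 2)) := rfl


lemma c_pos {m : ℝ} (hm : 1 / 2 < m) : 0 < pearsonC m := inv_pos.2 (I_pos hm)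

lemma norm_one {m : ℝ} (hm : 1 / 2 < m) :
    ∫ x : ℝ, pearsonC m * (1 + x ^ 2) ^ (-m) = 1 := by
  rw [integral_const_mul, pearsonC, inv_mul_cancel₀ (I_pos hm).ne']

lemma contD (ε : ℝ) : Continuous fun x : ℝ => (x - ε) / (1 + (x - ε) ^ 2) :=
  Continuous.div (by continuity) (by continuity) (fun x => (pos_base (x - ε)).ne')

lemma integB {m : ℝ} (hm : 1 / 2 < m) (ε : ℝ) :
    Integrable fun x : ℝ => (x - ε) / (1 + (x - ε) ^ 2) * (pearsonC m * (1 + x ^ 2) ^ (-m)) := by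
  apply (((integ_rpow hm).const_mul (pearsonC m)).const_mul (1/2)).mono'
    ((contD ε).mul ((continuous_const.mul (cont_rpow m)))).aestronglyMeasurable
  filter_upwards with x
  simp only [Pi.mul_apply, Pi.pow_apply]
  rw [norm_mul, Real.norm_eq_abs, Real.norm_eq_abs,
    abs_of_pos (by have := c_pos hm; positivity : (0:ℝ) < pearsonC m * (1 + x ^ 2) ^ (-m))]
  calc |(x - ε) / (1 + (x - ε) ^ 2)| * (pearsonC m * (1 + x ^ 2) ^ (-m))
      ≤ 1 / 2 * (pearsonC m * (1 + x ^ 2) ^ (-m)) := by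
        apply mul_le_mul_of_nonneg_right (g_bdd _)
        have := c_pos hm; positivity
    _ = 1 / 2 * (pearsonC m * (1 + x ^ 2) ^ (-m)) := rfl

lemma integA {m : ℝ} (hm : 1 / 2 < m) (ε : ℝ) :
    Integrable fun x : ℝ =>
      ((x - ε) / (1 + (x - ε) ^ 2)) ^ 2 * (pearsonC m * (1 + x ^ 2) ^ (-m)) := by
  apply (((integ_rpow hm).const_mul (pearsonC m)).const_mul (1/4)).mono'
    (((contD ε).pow 2).mul ((continuous_const.mul (cont_rpow m)))).aestronglyMeasurable
  filter_upwards with x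
  simp only [Pi.mul_apply, Pi.pow_apply]
  rw [norm_mul, Real.norm_eq_abs, Real.norm_eq_abs,
    abs_of_pos (by have := c_pos hm; positivity : (0:ℝ) < pearsonC m * (1 + x ^ 2) ^ (-m))]
  apply mul_le_mul_of_nonneg_right _ (by have := c_pos hm; positivity)
  rw [abs_pow]
  calc |(x - ε) / (1 + (x - ε) ^ 2)| ^ 2 ≤ (1/2) ^ 2 := by
        apply pow_le_pow_left₀ (abs_nonneg _) (g_bdd _)
    _ = 1 / 4 := by norm_num

lemma B0 {m : ℝ} (hm : 1 / 2 < m) :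
    ∫ x : ℝ, (x - 0) / (1 + (x - 0) ^ 2) * (pearsonC m * (1 + x ^ 2) ^ (-m)) = 0 := by
  set f := fun x : ℝ => (x - 0) / (1 + (x - 0) ^ 2) * (pearsonC m * (1 + x ^ 2) ^ (-m)) with hf
  have hodd : ∀ x : ℝ, f (-x) = -f x := by
    intro x; simp only [hf]
    rw [show ((-x:ℝ) - 0) = -(x - 0) by ring, show ((-x:ℝ)) ^ 2 = x ^ 2 by ring]
    rw [show (-(x - 0)) ^ 2 = (x - 0) ^ 2 by ring]
    ring
  have h1 : ∫ x : ℝ, f (-x) = ∫ x : ℝ, f x := integral_neg_eq_self f volume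
  rw [integral_congr_ae (g := fun x => -f x) (by filter_upwards with x; exact hodd x),
    integral_neg] at h1
  linarith [h1]

lemma A0 {m : ℝ} (hm : 1 / 2 < m) :
    ∫ x : ℝ, ((x - 0) / (1 + (x - 0) ^ 2)) ^ 2 * (pearsonC m * (1 + x ^ 2) ^ (-m))
      = (2 * m - 1) / (4 * m * (m + 1)) := by
  have key : ∀ x : ℝ, ((x - 0) / (1 + (x - 0) ^ 2)) ^ 2 * (pearsonC m * (1 + x ^ 2) ^ (-m))
      = pearsonC m * (x ^ 2 * (1 + x ^ 2) ^ (-((m + 1) + 1))) := by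
    intro x
    have hb := pos_base x
    rw [sub_zero, div_pow]
    rw [show -((m + 1) + 1) = -m + (-2 : ℝ) by ring, Real.rpow_add hb]
    rw [show ((-2 : ℝ)) = ((-2 : ℤ) : ℝ) by norm_num, Real.rpow_intCast]
    rw [zpow_neg, show ((2:ℤ)) = ((2:ℕ):ℤ) by norm_num, zpow_natCast]
    field_simp
  rw [integral_congr_ae (g := fun x => pearsonC m * (x ^ 2 * (1 + x ^ 2) ^ (-((m + 1) + 1))))
    (by filter_upwards with x; exact key x)]
  rw [integral_const_mul, recurrence (by linarith : (1:ℝ)/2 < m + 1), I_succ hm]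
  rw [pearsonC]
  have hI := I_pos hm
  have hm0 : m ≠ 0 := by linarith
  have hm1 : m + 1 ≠ 0 := by linarith
  field_simp
  ring_nf

lemma wt_nonneg {m : ℝ} (hm : 1 / 2 < m) (x : ℝ) :
    0 ≤ pearsonC m * (1 + x ^ 2) ^ (-m) := by
  have := c_pos hm; positivity

lemma diffA {m : ℝ} (hm : 1 / 2 < m) {ε : ℝ} (hε : 0 ≤ ε) :
    |(∫ x : ℝ, ((x - ε) / (1 + (x - ε) ^ 2)) ^ 2 * (pearsonC m * (1 + x ^ 2) ^ (-m))) -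
      ∫ x : ℝ, ((x - 0) / (1 + (x - 0) ^ 2)) ^ 2 * (pearsonC m * (1 + x ^ 2) ^ (-m))| ≤ ε := by
  rw [← integral_sub (integA hm ε) (integA hm 0)]
  rw [← Real.norm_eq_abs]
  refine (norm_integral_le_integral_norm _).trans ?_
  have hb : ∀ x : ℝ,
      ‖((x - ε) / (1 + (x - ε) ^ 2)) ^ 2 * (pearsonC m * (1 + x ^ 2) ^ (-m)) -
        ((x - 0) / (1 + (x - 0) ^ 2)) ^ 2 * (pearsonC m * (1 + x ^ 2) ^ (-m))‖
      ≤ ε * (pearsonC m * (1 + x ^ 2) ^ (-m)) := by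
    intro x
    set a := (x - ε) / (1 + (x - ε) ^ 2)
    set b := (x - 0) / (1 + (x - 0) ^ 2)
    have h1 : a ^ 2 * (pearsonC m * (1 + x ^ 2) ^ (-m)) -
        b ^ 2 * (pearsonC m * (1 + x ^ 2) ^ (-m))
        = (a ^ 2 - b ^ 2) * (pearsonC m * (1 + x ^ 2) ^ (-m)) := by ring
    rw [h1, norm_mul, Real.norm_eq_abs, Real.norm_eq_abs, abs_of_nonneg (wt_nonneg hm x)]
    apply mul_le_mul_of_nonneg_right _ (wt_nonneg hm x)
    have h2 : a ^ 2 - b ^ 2 = (a - b) * (a + b) := by ring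
    rw [h2, abs_mul]
    have h3 : |a - b| ≤ ε := by
      have h := g_lip (x - ε) (x - 0)
      rw [show (x - ε) - (x - 0) = -ε by ring, abs_neg, abs_of_nonneg hε] at h
      exact h
    have h4 : |a + b| ≤ 1 := by
      calc |a + b| ≤ |a| + |b| := abs_add_le _ _
        _ ≤ 1/2 + 1/2 := add_le_add (g_bdd _) (g_bdd _)
        _ = 1 := by norm_num
    calc |a - b| * |a + b| ≤ ε * 1 :=
        mul_le_mul h3 h4 (abs_nonneg _) hε
      _ = ε := mul_one ε
  refine le_trans (integral_mono ((integA hm ε).sub (integA hm 0)).norm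
    (((integ_rpow hm).const_mul (pearsonC m)).const_mul ε) hb) ?_
  rw [show (fun x : ℝ => ε * (pearsonC m * (1 + x ^ 2) ^ (-m)))
    = fun x : ℝ => ε * (pearsonC m * (1 + x ^ 2) ^ (-m)) from rfl]
  rw [integral_const_mul, norm_one hm, mul_one]

lemma diffB {m : ℝ} (hm : 1 / 2 < m) {ε : ℝ} (hε : 0 ≤ ε) :
    |∫ x : ℝ, (x - ε) / (1 + (x - ε) ^ 2) * (pearsonC m * (1 + x ^ 2) ^ (-m))| ≤ ε := by
  have h0 := B0 hm
  rw [show (∫ x : ℝ, (x - ε) / (1 + (x - ε) ^ 2) * (pearsonC m * (1 + x ^ 2) ^ (-m)))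
    = (∫ x : ℝ, (x - ε) / (1 + (x - ε) ^ 2) * (pearsonC m * (1 + x ^ 2) ^ (-m))) -
      ∫ x : ℝ, (x - 0) / (1 + (x - 0) ^ 2) * (pearsonC m * (1 + x ^ 2) ^ (-m)) by rw [h0]; ring]
  rw [← integral_sub (integB hm ε) (integB hm 0), ← Real.norm_eq_abs]
  refine (norm_integral_le_integral_norm _).trans ?_
  have hb : ∀ x : ℝ,
      ‖(x - ε) / (1 + (x - ε) ^ 2) * (pearsonC m * (1 + x ^ 2) ^ (-m)) -
        (x - 0) / (1 + (x - 0) ^ 2) * (pearsonC m * (1 + x ^ 2) ^ (-m))‖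
      ≤ ε * (pearsonC m * (1 + x ^ 2) ^ (-m)) := by
    intro x
    set a := (x - ε) / (1 + (x - ε) ^ 2)
    set b := (x - 0) / (1 + (x - 0) ^ 2)
    have h1 : a * (pearsonC m * (1 + x ^ 2) ^ (-m)) - b * (pearsonC m * (1 + x ^ 2) ^ (-m))
        = (a - b) * (pearsonC m * (1 + x ^ 2) ^ (-m)) := by ring
    rw [h1, norm_mul, Real.norm_eq_abs, Real.norm_eq_abs, abs_of_nonneg (wt_nonneg hm x)]
    apply mul_le_mul_of_nonneg_right _ (wt_nonneg hm x)
    have h := g_lip (x - ε) (x - 0)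
    rw [show (x - ε) - (x - 0) = -ε by ring, abs_neg, abs_of_nonneg hε] at h
    exact h
  refine le_trans (integral_mono ((integB hm ε).sub (integB hm 0)).norm
    (((integ_rpow hm).const_mul (pearsonC m)).const_mul ε) hb) ?_
  rw [integral_const_mul, norm_one hm, mul_one]


theorem pearsonH_expansion (m : ℝ) (hm : 1 / 2 < m) :
    ∃ C > 0, ∃ ε₀ > 0, ∀ ε : ℝ, 0 < ε → ε < ε₀ →
      |pearsonH m ε - (2 * m - 1) / (4 * m * (m + 1))| ≤ C * ε := by
  refine ⟨2, by norm_num, 1, by norm_num, fun ε hε hε1 => ?_⟩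
  have hA := diffA hm hε.le
  have hB := diffB hm (ε := ε) hε.le
  rw [A0 hm] at hA
  have hB2 : (∫ x : ℝ, (x - ε) / (1 + (x - ε) ^ 2) * (pearsonC m * (1 + x ^ 2) ^ (-m))) ^ 2
      ≤ ε ^ 2 := by
    rw [← sq_abs]
    exact pow_le_pow_left₀ (abs_nonneg _) hB 2
  rw [pearsonH]
  set A := ∫ x : ℝ, ((x - ε) / (1 + (x - ε) ^ 2)) ^ 2 * (pearsonC m * (1 + x ^ 2) ^ (-m))
  set B := ∫ x : ℝ, (x - ε) / (1 + (x - ε) ^ 2) * (pearsonC m * (1 + x ^ 2) ^ (-m))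
  have hB2' : 0 ≤ B ^ 2 := sq_nonneg B
  have : |A - B ^ 2 - (2 * m - 1) / (4 * m * (m + 1))|
      ≤ |A - (2 * m - 1) / (4 * m * (m + 1))| + B ^ 2 := by
    rw [show A - B ^ 2 - (2 * m - 1) / (4 * m * (m + 1))
      = (A - (2 * m - 1) / (4 * m * (m + 1))) + (-(B ^ 2)) by ring]
    refine (abs_add_le _ _).trans ?_
    rw [abs_neg, abs_of_nonneg hB2']
  refine this.trans ?_
  have : ε ^ 2 ≤ ε := by nlinarith
  linarith

end Aux
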